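/- Let a_i ≤ b_i in ρR̃ for i = 1,…,n. Then the generalized n-dimensional interval ∏_{i=1}^n [a_i, b_i] := { x ∈ ρR̃ⁿ : a_i ≤ x_i ≤ b_i for all i } is a functionally compact subset of ρR̃ⁿ. -/

import Mathlib

open MeasureTheory

namespace HFT

noncomputable section

/-- The index set `I = (0,1]`. -/
abbrev Idx : Type := {e : ℝ // 0 < e ∧ e ≤ 1}

/-- "For ε small": the property holds for all sufficiently small indices. -/
def Ev (P : Idx → Prop) : Prop := ∃ e0 : Idx, ∀ e : Idx, e.1 ≤ e0.1 → P e

/-- A gauge: a net `ρ : I → (0,1]` tending to `0` as `ε → 0⁺`. -/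
structure Gauge where
  ρ : Idx → ℝ
  pos : ∀ e, 0 < ρ e
  le_one : ∀ e, ρ e ≤ 1
  to_zero : ∀ δ : ℝ, 0 < δ → Ev fun e => ρ e < δ

variable (g : Gauge)

/-- A net of reals is ρ-moderate. -/
def ModerateR (x : Idx → ℝ) : Prop := ∃ N : ℕ, Ev fun e => |x e| ≤ (g.ρ e)⁻¹ ^ N

/-- Two real nets are ρ-equivalent: they define the same generalized number. -/
def EquivR (x y : Idx → ℝ) : Prop := ∀ m : ℕ, Ev fun e => |x e - y e| ≤ g.ρ e ^ m

/-- ρ-negligible net. -/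
def NegligibleR (x : Idx → ℝ) : Prop := EquivR g x fun _ => 0

/-- Order of the Robinson–Colombeau ring at the level of representatives. -/
def leR (x y : Idx → ℝ) : Prop :=
  ∃ z, NegligibleR g z ∧ Ev fun e => x e ≤ y e + z e

/-- Invertibility in the Robinson–Colombeau ring, at the level of representatives. -/
def InvR (x : Idx → ℝ) : Prop :=
  ∃ y, ModerateR g y ∧ EquivR g (fun e => x e * y e) fun _ => 1

/-- Strict order: `x < y` iff `x ≤ y` and `y − x` is invertible. -/
def ltR (x y : Idx → ℝ) : Prop := leR g x y ∧ InvR g fun e => y e - x e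

/-- `x > 0`: positive and invertible. -/
def PosInvR (x : Idx → ℝ) : Prop := ltR g (fun _ => 0) x

/-- Constant net. -/
def cR (c : ℝ) : Idx → ℝ := fun _ => c

/-- Positive infinite generalized number. -/
def InfiniteR (k : Idx → ℝ) : Prop := ∀ r : ℝ, 0 < r → leR g (cR r) k

/-- Strong infinite number: `|k| ≥ dρ^{−s}` for some real `s > 0`. -/
def StrongInfiniteR (k : Idx → ℝ) : Prop :=
  ∃ s : ℝ, 0 < s ∧ Ev fun e => g.ρ e ^ (-s) ≤ |k e|

def dRhoPow (m : ℕ) : Idx → ℝ := fun e => g.ρ e ^ m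
def dRhoNegPow (m : ℕ) : Idx → ℝ := fun e => (g.ρ e)⁻¹ ^ m

/-- Moderate complex nets. -/
def ModerateC (x : Idx → ℂ) : Prop := ModerateR g fun e => ‖x e‖

/-- Equivalent complex nets. -/
def EquivC (x y : Idx → ℂ) : Prop :=
  ∀ m : ℕ, Ev fun e => ‖x e - y e‖ ≤ g.ρ e ^ m

/- Subpoints: co-final subsets of the index set and relativized notions. -/

/-- `L ⊆ I` is co-final: `0` is an accumulation point of `L`. -/
def CoFinal (L : Set Idx) : Prop := ∀ δ : ℝ, 0 < δ → ∃ e ∈ L, e.1 < δ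

def EvOn (L : Set Idx) (P : Idx → Prop) : Prop :=
  ∃ e0 : Idx, ∀ e ∈ L, e.1 ≤ e0.1 → P e

def ModerateROn (L : Set Idx) (x : Idx → ℝ) : Prop :=
  ∃ N : ℕ, EvOn L fun e => |x e| ≤ (g.ρ e)⁻¹ ^ N

def EquivROn (L : Set Idx) (x y : Idx → ℝ) : Prop :=
  ∀ m : ℕ, EvOn L fun e => |x e - y e| ≤ g.ρ e ^ m

def NegligibleROn (L : Set Idx) (x : Idx → ℝ) : Prop := EquivROn g L x fun _ => 0

def leROn (L : Set Idx) (x y : Idx → ℝ) : Prop :=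
  ∃ z, NegligibleROn g L z ∧ EvOn L fun e => x e ≤ y e + z e

def InvROn (L : Set Idx) (x : Idx → ℝ) : Prop :=
  ∃ y, ModerateROn g L y ∧ EquivROn g L (fun e => x e * y e) fun _ => 1

def ltROn (L : Set Idx) (x y : Idx → ℝ) : Prop :=
  leROn g L x y ∧ InvROn g L fun e => y e - x e

/- Vector-valued generalized points. -/

abbrev En (n : ℕ) : Type := EuclideanSpace ℝ (Fin n)

def ModerateV {n : ℕ} (x : Idx → En n) : Prop := ModerateR g fun e => ‖x e‖

def EquivV {n : ℕ} (x y : Idx → En n) : Prop :=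
  ∀ m : ℕ, Ev fun e => ‖x e - y e‖ ≤ g.ρ e ^ m

def distNet {n : ℕ} (x y : Idx → En n) : Idx → ℝ := fun e => ‖x e - y e‖
def normNet {n : ℕ} (x : Idx → En n) : Idx → ℝ := fun e => ‖x e‖
def coord {n : ℕ} (x : Idx → En n) (i : Fin n) : Idx → ℝ := fun e => x e i

/-- Membership in the internal set generated by a net of subsets of `ℝⁿ`. -/
def MemInternal {n : ℕ} (A : Idx → Set (En n)) (x : Idx → En n) : Prop :=
  ∃ x', EquivV g x x' ∧ Ev fun e => x' e ∈ A e

/-- Strong membership: every representative is eventually in `A_ε`. -/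
def StrongMem {n : ℕ} (A : Idx → Set (En n)) (x : Idx → En n) : Prop :=
  ∀ x', EquivV g x x' → Ev fun e => x' e ∈ A e

/-- A (saturated) set of generalized points is open in the sharp topology. -/
def SharpOpen {n : ℕ} (S : Set (Idx → En n)) : Prop :=
  ∀ x, ModerateV g x → x ∈ S →
    ∃ r, PosInvR g r ∧ ∀ y, ModerateV g y → ltR g (distNet y x) r → y ∈ S

/-- Closed in the sharp topology. -/
def SharpClosed {n : ℕ} (S : Set (Idx → En n)) : Prop :=
  ∀ x, ModerateV g x → x ∉ S →
    ∃ r, PosInvR g r ∧ ∀ y, ModerateV g y → ltR g (distNet y x) r → y ∉ S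

/-- Closure in the sharp topology. -/
def SharpClosure {n : ℕ} (S : Set (Idx → En n)) : Set (Idx → En n) :=
  {x | ModerateV g x ∧ ∀ r, PosInvR g r → ∃ y ∈ S, ltR g (distNet y x) r}

/-- Sharply bounded set of generalized points. -/
def SharplyBounded {n : ℕ} (S : Set (Idx → En n)) : Prop :=
  ∃ R, PosInvR g R ∧ ∀ x ∈ S, ltR g (normNet x) R

/-- Functionally compact: an internal set generated by compacts which is sharply bounded. -/
def FCompact {n : ℕ} (S : Set (Idx → En n)) : Prop :=
  (∃ A : Idx → Set (En n), (∀ e, IsCompact (A e)) ∧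
    S = {x | ModerateV g x ∧ MemInternal g A x}) ∧ SharplyBounded g S

/-- Sharp ball of center `c` and radius `r`. -/
def BallG {n : ℕ} (c : Idx → En n) (r : Idx → ℝ) : Set (Idx → En n) :=
  {x | ModerateV g x ∧ ltR g (distNet x c) r}

/-- Pointwise sum of two sets of generalized points. -/
def sumSet {n : ℕ} (S T : Set (Idx → En n)) : Set (Idx → En n) :=
  {z | ∃ x ∈ S, ∃ y ∈ T, z = fun e => x e + y e}

/-- The generalized box `[−h,h]ⁿ` as a set of generalized points. -/
def BoxSet {n : ℕ} (h : Idx → ℝ) : Set (Idx → En n) :=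
  {x | ModerateV g x ∧ ∀ i : Fin n, leR g (fun e => |x e i|) h}

/-- All generalized (moderate) points. -/
def AllPts (n : ℕ) : Set (Idx → En n) := {x | ModerateV g x}

/- Derivatives of smooth maps on `ℝⁿ`. -/

noncomputable def pderivF {n : ℕ} {F : Type*} [NormedAddCommGroup F] [NormedSpace ℝ F]
    (i : Fin n) (f : En n → F) : En n → F :=
  fun x => fderiv ℝ f x (EuclideanSpace.single i 1)

/-- Iterated partial derivative `∂^α`. -/
noncomputable def pderivMulti {n : ℕ} {F : Type*} [NormedAddCommGroup F] [NormedSpace ℝ F]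
    (α : Fin n → ℕ) (f : En n → F) : En n → F :=
  (List.finRange n).foldr (fun i h => (pderivF i)^[α i] h) f

/-- The net `(f_ε)` of smooth functions defines a GSF on the set `X` of generalized points. -/
def IsGSFOn {n : ℕ} (X : Set (Idx → En n)) (f : Idx → En n → ℂ) : Prop :=
  (∀ e, ContDiff ℝ (⊤ : ℕ∞) (f e)) ∧
  ∀ x ∈ X, ∀ α : Fin n → ℕ,
    ModerateC g (fun e => pderivMulti α (f e) (x e)) ∧
    ∀ x' ∈ X, EquivV g x x' →
      EquivC g (fun e => pderivMulti α (f e) (x e)) (fun e => pderivMulti α (f e) (x' e))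

/-- Support of a GSF: sharp closure of the points where `|f(x)|` is positive invertible. -/
def suppNet {n : ℕ} (f : Idx → En n → ℂ) : Set (Idx → En n) :=
  SharpClosure g {x | ModerateV g x ∧ PosInvR g fun e => ‖f e (x e)‖}

/- Integration over hyperfinite boxes. -/

/-- The box `[−c,c]ⁿ ⊆ ℝⁿ`. -/
def box (n : ℕ) (c : ℝ) : Set (En n) := {v | ∀ i, |v i| ≤ c}

/-- ε-wise integral over the box `[−h_ε, h_ε]ⁿ`. -/
noncomputable def intBox {n : ℕ} (f : Idx → En n → ℂ) (h : Idx → ℝ) : Idx → ℂ :=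
  fun e => ∫ v in box n (h e), f e v

/-- Convolution of GSF, integrating over a box containing the support of the first factor. -/
noncomputable def convNet {n : ℕ} (f f' : Idx → En n → ℂ) (h : Idx → ℝ) :
    Idx → En n → ℂ :=
  fun e x => ∫ y in box n (h e), f e y * f' e (x - y)

/-- Dot product on `ℝⁿ`. -/
def dotP {n : ℕ} (x w : En n) : ℝ := ∑ i, x i * w i

/-- The hyperfinite Fourier transform `F_k(f)`. -/
noncomputable def FTnet {n : ℕ} (f : Idx → En n → ℂ) (k : Idx → ℝ) : Idx → En n → ℂ :=
  fun e w => ∫ x in box n (k e), f e x * Complex.exp (-(Complex.I * (dotP x w : ℂ)))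

/- One-dimensional versions. -/

def SharpClosure1 (S : Set (Idx → ℝ)) : Set (Idx → ℝ) :=
  {x | ModerateR g x ∧ ∀ r, PosInvR g r → ∃ y ∈ S, ltR g (fun e => |y e - x e|) r}

def supp1 (ψ : Idx → ℝ → ℂ) : Set (Idx → ℝ) :=
  SharpClosure1 g {x | ModerateR g x ∧ PosInvR g fun e => ‖ψ e (x e)‖}

def IsGSF1 (X : Set (Idx → ℝ)) (ψ : Idx → ℝ → ℂ) : Prop :=
  (∀ e, ContDiff ℝ (⊤ : ℕ∞) (ψ e)) ∧
  ∀ x ∈ X, ∀ j : ℕ,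
    ModerateC g (fun e => iteratedDeriv j (ψ e) (x e)) ∧
    ∀ x' ∈ X, EquivR g x x' →
      EquivC g (fun e => iteratedDeriv j (ψ e) (x e))
        (fun e => iteratedDeriv j (ψ e) (x' e))

/-- One-dimensional hyperfinite Fourier transform over `[−k,k]`. -/
noncomputable def FT1 (ψ : Idx → ℝ → ℂ) (k : Idx → ℝ) : Idx → ℝ → ℂ :=
  fun e w => ∫ x in Set.Icc (-(k e)) (k e), ψ e x * Complex.exp (-(Complex.I * ((x * w : ℝ) : ℂ)))

-- ===== auxiliary lemmas =====

lemma ev_of_forall {P : Idx → Prop} (h : ∀ e, P e) : Ev P :=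
  ⟨⟨1, by norm_num⟩, fun e _ => h e⟩

lemma ev_mono {P Q : Idx → Prop} (h : ∀ e, P e → Q e) (hP : Ev P) : Ev Q := by
  obtain ⟨e0, h0⟩ := hP; exact ⟨e0, fun e he => h e (h0 e he)⟩

lemma ev_and {P Q : Idx → Prop} (hP : Ev P) (hQ : Ev Q) : Ev fun e => P e ∧ Q e := by
  obtain ⟨e0, h0⟩ := hP; obtain ⟨e1, h1⟩ := hQ
  refine ⟨if e0.1 ≤ e1.1 then e0 else e1, fun e he => ?_⟩
  by_cases h : e0.1 ≤ e1.1
  · rw [if_pos h] at he; exact ⟨h0 e he, h1 e (he.trans h)⟩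
  · rw [if_neg h] at he; exact ⟨h0 e (he.trans (le_of_not_ge h)), h1 e he⟩

lemma ev_forall_fin {n : ℕ} {P : Fin n → Idx → Prop} (h : ∀ i, Ev (P i)) :
    Ev fun e => ∀ i, P i e := by
  induction n with
  | zero => exact ev_of_forall fun e i => i.elim0
  | succ n ih =>
    refine ev_mono (fun e he i => ?_) (ev_and (h 0) (ih fun i => h i.succ))
    exact Fin.cases he.1 (fun j => he.2 j) i

lemma one_le_inv_rho (g : Gauge) (e : Idx) : 1 ≤ (g.ρ e)⁻¹ :=
  (one_le_inv₀ (g.pos e)).2 (g.le_one e)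

lemma coord_abs_le_norm {n : ℕ} (v : En n) (i : Fin n) : |v i| ≤ ‖v‖ := by
  rw [EuclideanSpace.norm_eq, show |v i| = Real.sqrt (|v i| ^ 2) by
    rw [Real.sqrt_sq_eq_abs, abs_abs]]
  apply Real.sqrt_le_sqrt
  have := Finset.single_le_sum (f := fun j => ‖v j‖ ^ 2)
    (fun j _ => by positivity) (Finset.mem_univ i)
  simpa [Real.norm_eq_abs] using this

lemma norm_le_of_coord {n : ℕ} (v : En n) (c : ℝ) (hc : 0 ≤ c) (h : ∀ i, |v i| ≤ c) :
    ‖v‖ ≤ (n + 1) * c := by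
  rw [EuclideanSpace.norm_eq]
  have h1 : ∑ i, ‖v i‖ ^ 2 ≤ ((n + 1) * c) ^ 2 := by
    calc ∑ i, ‖v i‖ ^ 2 ≤ ∑ _i : Fin n, c ^ 2 := by
          refine Finset.sum_le_sum fun i _ => ?_
          rw [Real.norm_eq_abs]
          exact pow_le_pow_left₀ (abs_nonneg _) (h i) 2
      _ = (n : ℝ) * c ^ 2 := by simp [Finset.sum_const]
      _ ≤ ((n + 1) * c) ^ 2 := by nlinarith [sq_nonneg c, Nat.cast_nonneg (α := ℝ) n]
  calc Real.sqrt (∑ i, ‖v i‖ ^ 2) ≤ Real.sqrt (((n + 1) * c) ^ 2) := Real.sqrt_le_sqrt h1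
    _ = (n + 1) * c := Real.sqrt_sq (by positivity)

lemma negligible_add {g : Gauge} {z w : Idx → ℝ} (hz : NegligibleR g z)
    (hw : NegligibleR g w) : NegligibleR g fun e => z e + w e := by
  intro m
  have h3 : Ev fun e => g.ρ e < 1 / 2 := g.to_zero _ (by norm_num)
  refine ev_mono ?_ (ev_and (hz (m + 1)) (ev_and (hw (m + 1)) h3))
  rintro e ⟨h1, h2, hρ⟩
  have hp : 0 < g.ρ e := g.pos e
  simp only [sub_zero] at h1 h2 ⊢
  calc |z e + w e| ≤ |z e| + |w e| := abs_add_le _ _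
    _ ≤ 2 * g.ρ e ^ (m + 1) := by linarith
    _ ≤ g.ρ e ^ m := by rw [pow_succ]; nlinarith [pow_pos hp m]


def clampPt {n : ℕ} (a b : Fin n → ℝ) (v : En n) : En n :=
  WithLp.toLp 2 (fun i => max (min (a i) (b i)) (min (v i) (b i)))

/-- generalized n-dimensional intervals are functionally compact. -/
theorem interval_fcompact (g : Gauge) {n : ℕ} (a b : Fin n → Idx → ℝ)
    (ha : ∀ i, ModerateR g (a i)) (hb : ∀ i, ModerateR g (b i))
    (hab : ∀ i, leR g (a i) (b i)) :
    FCompact g {x : Idx → En n | ModerateV g x ∧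
      ∀ i : Fin n, leR g (a i) (coord x i) ∧ leR g (coord x i) (b i)} := by
  classical
  set A : Idx → Set (En n) :=
    fun e => {v | ∀ i, min (a i e) (b i e) ≤ v i ∧ v i ≤ b i e} with hA
  constructor
  · refine ⟨A, fun e => ?_, ?_⟩
    · -- compactness of each A e
      apply Metric.isCompact_of_isClosed_isBounded
      · have hrep : A e = ⋂ i, ((fun v : En n => v i) ⁻¹'
            Set.Icc (min (a i e) (b i e)) (b i e)) := by
          ext v
          simp [hA, Set.mem_iInter, Set.mem_Icc]
        rw [hrep]
        refine isClosed_iInter fun i => IsClosed.preimage ?_ isClosed_Icc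
        exact (EuclideanSpace.proj (𝕜 := ℝ) i).continuous
      · set c : ℝ := ∑ i, (|a i e| + |b i e|) with hc
        have hc0 : 0 ≤ c := Finset.sum_nonneg fun i _ => by positivity
        refine (Metric.isBounded_closedBall (x := (0 : En n))
          (r := (n + 1) * c)).subset ?_
        intro v hv
        rw [Metric.mem_closedBall, dist_zero_right]
        refine norm_le_of_coord v c hc0 fun i => ?_
        have h1 := (hv i).1
        have h2 := (hv i).2
        have hterm : |a i e| + |b i e| ≤ c :=
          Finset.single_le_sum (f := fun j => |a j e| + |b j e|)
            (fun j _ => by positivity) (Finset.mem_univ i)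
        have hmin : -(|a i e| + |b i e|) ≤ min (a i e) (b i e) :=
          le_min (by linarith [neg_abs_le (a i e), abs_nonneg (b i e)])
            (by linarith [neg_abs_le (b i e), abs_nonneg (a i e)])
        rw [abs_le]
        exact ⟨by linarith, by linarith [le_abs_self (b i e), abs_nonneg (a i e)]⟩
    · -- set equality
      ext x
      simp only [Set.mem_setOf_eq]
      constructor
      · rintro ⟨hx, hmem⟩
        refine ⟨hx, ?_⟩
        choose z hz hza using fun i => (hmem i).1
        choose w hw hwb using fun i => (hmem i).2
        refine ⟨fun e => clampPt (fun i => a i e) (fun i => b i e) (x e),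
          ?_, ev_of_forall fun e i => ⟨le_max_left _ _,
            max_le (min_le_right _ _) (min_le_right _ _)⟩⟩
        intro m
        have hρ : Ev fun e => g.ρ e < 1 / (n + 1) := g.to_zero _ (by positivity)
        have hz' : Ev fun e => ∀ i, |z i e - 0| ≤ g.ρ e ^ (m + 1) :=
          ev_forall_fin fun i => hz i (m + 1)
        have hw' : Ev fun e => ∀ i, |w i e - 0| ≤ g.ρ e ^ (m + 1) :=
          ev_forall_fin fun i => hw i (m + 1)
        have hza' : Ev fun e => ∀ i, a i e ≤ x e i + z i e := ev_forall_fin hza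
        have hwb' : Ev fun e => ∀ i, x e i ≤ b i e + w i e := ev_forall_fin hwb
        refine ev_mono ?_ (ev_and hρ (ev_and hz' (ev_and hw' (ev_and hza' hwb'))))
        rintro e ⟨h1, h2, h3, h4, h5⟩
        have hp := g.pos e
        have key : ∀ i, |x e i -
            max (min (a i e) (b i e)) (min (x e i) (b i e))| ≤ g.ρ e ^ (m + 1) := by
          intro i
          have hzi := h2 i; have hwi := h3 i
          rw [sub_zero] at hzi hwi
          have hz2 : z i e ≤ g.ρ e ^ (m + 1) := (abs_le.1 hzi).2
          have hw2 : w i e ≤ g.ρ e ^ (m + 1) := (abs_le.1 hwi).2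
          have hpow : 0 < g.ρ e ^ (m + 1) := pow_pos hp _
          rcases le_total (x e i) (b i e) with hxb | hxb
          · rcases le_total (min (a i e) (b i e)) (x e i) with hl | hl
            · rw [min_eq_left hxb, max_eq_right hl, sub_self, abs_zero]
              exact (pow_pos hp _).le
            · rw [min_eq_left hxb, max_eq_left hl, abs_le]
              refine ⟨?_, by linarith⟩
              have hmla : min (a i e) (b i e) ≤ a i e := min_le_left _ _
              linarith [h4 i]
          · rw [min_eq_right hxb, max_eq_right (min_le_right (a i e) (b i e)), abs_le]
            exact ⟨by linarith, by linarith [h5 i]⟩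
        have hnorm : ‖x e - clampPt (fun i => a i e) (fun i => b i e) (x e)‖
            ≤ (n + 1) * g.ρ e ^ (m + 1) := by
          refine norm_le_of_coord _ _ (pow_pos hp _).le fun i => ?_
          exact key i
        refine hnorm.trans ?_
        rw [pow_succ]
        have hn1 : (0:ℝ) < (n:ℝ) + 1 := by positivity
        have : ((n:ℝ) + 1) * g.ρ e ≤ 1 := by
          have h1' := (lt_div_iff₀ hn1).1 h1
          nlinarith
        nlinarith [pow_pos hp m, pow_nonneg hp.le m]
      · rintro ⟨hx, x', hxx', hx'A⟩
        refine ⟨hx, fun i => ⟨?_, ?_⟩⟩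
        · -- a i ≤ coord x i
          obtain ⟨wi, hwi, hwab⟩ := hab i
          refine ⟨fun e => ‖x e - x' e‖ + max (a i e - b i e) 0, ?_, ?_⟩
          · intro m
            have h3 : Ev fun e => g.ρ e < 1 / 2 := g.to_zero _ (by norm_num)
            refine ev_mono ?_ (ev_and (hxx' (m + 1))
              (ev_and (hwi (m + 1)) (ev_and h3 hwab)))
            rintro e ⟨h1, h2, h3, h4⟩
            have hp := g.pos e
            rw [sub_zero] at h2 ⊢
            have hm1 : max (a i e - b i e) 0 ≤ g.ρ e ^ (m + 1) := by
              apply max_le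
              · linarith [(abs_le.1 h2).2, le_abs_self (wi e)]
              · exact (pow_pos hp _).le
            rw [abs_of_nonneg (add_nonneg (norm_nonneg _) (le_max_right _ _))]
            have : ‖x e - x' e‖ + max (a i e - b i e) 0 ≤ 2 * g.ρ e ^ (m + 1) := by
              linarith
            refine this.trans ?_
            rw [pow_succ]
            nlinarith [pow_pos hp m]
          · refine ev_mono ?_ hx'A
            intro e he
            have h1 := (he i).1
            have h2 : |x e i - x' e i| ≤ ‖x e - x' e‖ := coord_abs_le_norm (x e - x' e) i
            have h3 : a i e ≤ min (a i e) (b i e) + max (a i e - b i e) 0 := by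
              rcases le_total (a i e) (b i e) with h | h
              · rw [min_eq_left h]; simp [le_max_right]
              · rw [min_eq_right h, max_eq_left (by linarith)]; linarith
            have h4 := (abs_le.1 h2).1
            show a i e ≤ x e i + (‖x e - x' e‖ + max (a i e - b i e) 0)
            linarith
        · -- coord x i ≤ b i
          refine ⟨fun e => ‖x e - x' e‖, ?_, ?_⟩
          · intro m
            refine ev_mono ?_ (hxx' m)
            intro e h1
            rw [sub_zero, abs_of_nonneg (norm_nonneg _)]
            exact h1
          · refine ev_mono ?_ hx'A
            intro e he
            have h1 := (he i).2
            have h2 : |x e i - x' e i| ≤ ‖x e - x' e‖ := coord_abs_le_norm (x e - x' e) i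
            have h4 := (abs_le.1 h2).2
            show x e i ≤ b i e + ‖x e - x' e‖
            linarith
  · -- sharply bounded
    choose Na hNa using ha
    choose Nb hNb using hb
    set N : ℕ := (Finset.univ.sup Na) ⊔ (Finset.univ.sup Nb) with hN
    have hinv : ∀ e : Idx, 1 ≤ (g.ρ e)⁻¹ := one_le_inv_rho g
    have hinvN : ∀ e : Idx, 1 ≤ (g.ρ e)⁻¹ ^ N := fun e => one_le_pow₀ (hinv e)
    refine ⟨fun e => (2 * n + 3) * (g.ρ e)⁻¹ ^ N, ⟨⟨fun _ => 0, ?_, ?_⟩, ?_⟩, ?_⟩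
    · intro m
      refine ev_of_forall fun e => ?_
      simp only [sub_zero, abs_zero]
      exact pow_nonneg (g.pos e).le m
    · refine ev_of_forall fun e => ?_
      have h1 := hinvN e
      show (0:ℝ) ≤ (2 * n + 3) * (g.ρ e)⁻¹ ^ N + 0
      have hn : (0:ℝ) ≤ 2 * n + 3 := by positivity
      nlinarith
    · refine ⟨fun e => ((2 * n + 3) * (g.ρ e)⁻¹ ^ N)⁻¹, ⟨0, ?_⟩, ?_⟩
      · refine ev_of_forall fun e => ?_
        have h1 := hinvN e
        have h2 : (1:ℝ) ≤ (2 * n + 3) * (g.ρ e)⁻¹ ^ N := by nlinarith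
        rw [pow_zero, abs_of_nonneg (inv_nonneg.2 (by linarith))]
        exact inv_le_one_of_one_le₀ h2
      · intro m
        refine ev_of_forall fun e => ?_
        have h1 := hinvN e
        have h2 : ((2 * n + 3) * (g.ρ e)⁻¹ ^ N) ≠ 0 := by
          have hn : (0:ℝ) ≤ 2 * n + 3 := by positivity
          nlinarith
        simp only [sub_zero]
        rw [mul_inv_cancel₀ h2, sub_self, abs_zero]
        exact pow_nonneg (g.pos e).le m
    · rintro x ⟨hx, hmem⟩
      choose z hz hza using fun i => (hmem i).1
      choose w hw hwb using fun i => (hmem i).2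
      have hEvB : Ev fun e => ‖x e‖ + (g.ρ e)⁻¹ ^ N ≤ (2 * n + 3) * (g.ρ e)⁻¹ ^ N := by
        have h1 : Ev fun e => ∀ i, |a i e| ≤ (g.ρ e)⁻¹ ^ N := by
          refine ev_forall_fin fun i => ev_mono (fun e he => he.trans ?_) (hNa i)
          exact pow_le_pow_right₀ (hinv e)
            (le_trans (Finset.le_sup (Finset.mem_univ i)) le_sup_left)
        have h2 : Ev fun e => ∀ i, |b i e| ≤ (g.ρ e)⁻¹ ^ N := by
          refine ev_forall_fin fun i => ev_mono (fun e he => he.trans ?_) (hNb i)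
          exact pow_le_pow_right₀ (hinv e)
            (le_trans (Finset.le_sup (Finset.mem_univ i)) le_sup_right)
        have h3 : Ev fun e => ∀ i, |z i e| ≤ 1 := by
          refine ev_forall_fin fun i => ev_mono (fun e he => ?_) (hz i 0)
          simpa using he
        have h4 : Ev fun e => ∀ i, |w i e| ≤ 1 := by
          refine ev_forall_fin fun i => ev_mono (fun e he => ?_) (hw i 0)
          simpa using he
        have h5 : Ev fun e => ∀ i, a i e ≤ x e i + z i e := ev_forall_fin hza
        have h6 : Ev fun e => ∀ i, x e i ≤ b i e + w i e := ev_forall_fin hwb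
        refine ev_mono ?_ (ev_and h1 (ev_and h2 (ev_and h3
          (ev_and h4 (ev_and h5 h6)))))
        rintro e ⟨k1, k2, k3, k4, k5, k6⟩
        have hN1 := hinvN e
        have hcoord : ∀ i, |x e i| ≤ 2 * (g.ρ e)⁻¹ ^ N := by
          intro i
          rw [abs_le]
          constructor
          · have := (abs_le.1 (k1 i)).1
            have := (abs_le.1 (k3 i)).2
            linarith [k5 i]
          · have := (abs_le.1 (k2 i)).2
            have := (abs_le.1 (k4 i)).2
            linarith [k6 i]
        have hnx : ‖x e‖ ≤ (n + 1) * (2 * (g.ρ e)⁻¹ ^ N) :=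
          norm_le_of_coord _ _ (by linarith) hcoord
        nlinarith
      constructor
      · refine ⟨fun _ => 0, ?_, ?_⟩
        · intro m
          refine ev_of_forall fun e => ?_
          simp only [sub_zero, abs_zero]
          exact pow_nonneg (g.pos e).le m
        · refine ev_mono (fun e he => ?_) hEvB
          have := hinvN e
          simp only [normNet]
          have h0 : ‖x e‖ ≤ (2 * n + 3) * (g.ρ e)⁻¹ ^ N := by linarith
          linarith
      · refine ⟨fun e => ((2 * n + 3) * (g.ρ e)⁻¹ ^ N - ‖x e‖)⁻¹, ⟨0, ?_⟩, ?_⟩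
        · refine ev_mono (fun e he => ?_) hEvB
          have h1 := hinvN e
          have h2 : (1:ℝ) ≤ (2 * n + 3) * (g.ρ e)⁻¹ ^ N - ‖x e‖ := by linarith
          rw [pow_zero, abs_of_nonneg (inv_nonneg.2 (by linarith))]
          exact inv_le_one_of_one_le₀ h2
        · intro m
          refine ev_mono (fun e he => ?_) hEvB
          have h1 := hinvN e
          have h2 : (1:ℝ) ≤ (2 * n + 3) * (g.ρ e)⁻¹ ^ N - ‖x e‖ := by linarith
          have h3 : (2 * (n:ℝ) + 3) * (g.ρ e)⁻¹ ^ N - ‖x e‖ ≠ 0 := by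
            intro hc; rw [hc] at h2; norm_num at h2
          simp only [normNet]
          rw [mul_inv_cancel₀ h3, sub_self, abs_zero]
          exact pow_nonneg (g.pos e).le m

end

end HFT
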